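/- arXiv:2111.04553 — 2 statements merged into one kernel-verified Lean document; each statement's English description precedes it below -/
import Mathlib

section
/- For m < 0, suppose the equation x(k+1) = A(k)x(k) has an exponential dichotomy on (−∞, m] with projection P(k) of rank r. Then the equation has an exponential dichotomy on (−∞, 0] with a projection family Q(k) satisfying Q(k) = P(k) for all k ≤ m if and only if both of the following hold: Φ(0,m) = A(−1)···A(m) is one-to-one on N(P(m)), and the nullspace N(Φ(0,m)) is contained in R(P(m)). -/
/-!
Necessity: along a dichotomy on `(-∞, 0]`, `Φ(0,m)` maps `N(Q(m))` bijectively onto `N(Q(0))`;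
and if `Φ(0,m) x = 0`, invariance gives `Φ(0,m) (x - Q(m) x) = 0` with `x - Q(m) x ∈ N(Q(m))`,
so `x = Q(m) x ∈ R(Q(m))`.

Sufficiency: the two conditions say exactly that `Φ(0,m) R(P(m))` and `U(0) = Φ(0,m) N(P(m))`
are independent, so the former extends to a complement `W` of the latter. For `m ≤ k ≤ 0` the
spaces `R(k) = Φ(0,k)⁻¹ W` and `U(k) = Φ(k,m) N(P(m))` are complementary, `R(m) = R(P(m))`,
`A(k)` maps `R(k)` into `R(k+1)` and `U(k)` bijectively onto `U(k+1)`. Projecting onto `R(k)`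
along `U(k)` extends `P`, and no estimate is lost: on the finite interval `[m, 0]` every
quantity is bounded and the exponential weight changes by at most the factor `e^{-αm}`.
-/

noncomputable section

open scoped BigOperators

/-- ℝⁿ as a Euclidean space. -/
abbrev Euc (n : ℕ) := EuclideanSpace ℝ (Fin n)

/-- The transition matrix `Φ(k,m) = A(k-1) ⋯ A(m)`, with `Φ(m,m) = 1`
(and `Φ(k,m) = 1` when `k ≤ m`). -/
def Phi {n : ℕ} (A : ℤ → (Euc n →L[ℝ] Euc n)) (k m : ℤ) : Euc n →L[ℝ] Euc n :=
  (((List.range (k - m).toNat).map fun i => A (m + i)).reverse).prod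

/-- `J` is an interval of integers. -/
def IsIntInterval (J : Set ℤ) : Prop :=
  ∀ ⦃a b c : ℤ⦄, a ∈ J → b ∈ J → a ≤ c → c ≤ b → c ∈ J

/-- The equation `x(k+1) = A(k) x(k)` has an exponential dichotomy on `J` with
projection family `P`, constant `K` and exponent `α`. -/
structure ExpDichotomyOn {n : ℕ} (A : ℤ → (Euc n →L[ℝ] Euc n)) (J : Set ℤ)
    (P : ℤ → (Euc n →L[ℝ] Euc n)) (K α : ℝ) : Prop where
  one_le_K : 1 ≤ K
  alpha_pos : 0 < α
  proj : ∀ k ∈ J, P k ∘L P k = P k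
  rank_const : ∀ k ∈ J, ∀ m ∈ J,
    Module.finrank ℝ (LinearMap.range (P k : Euc n →ₗ[ℝ] Euc n)) = Module.finrank ℝ (LinearMap.range (P m : Euc n →ₗ[ℝ] Euc n))
  invariance : ∀ m ∈ J, ∀ k ∈ J, m ≤ k → Phi A k m ∘L P m = P k ∘L Phi A k m
  forward : ∀ m ∈ J, ∀ k ∈ J, m ≤ k →
    ‖Phi A k m ∘L P m‖ ≤ K * Real.exp (-α * ((k : ℝ) - (m : ℝ)))
  bijOn : ∀ k : ℤ, k ∈ J → k + 1 ∈ J →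
    Set.BijOn (A k) (LinearMap.ker (P k : Euc n →ₗ[ℝ] Euc n) : Set (Euc n)) (LinearMap.ker (P (k + 1) : Euc n →ₗ[ℝ] Euc n) : Set (Euc n))
  backward : ∃ Ψ : ℤ → ℤ → (Euc n →L[ℝ] Euc n), ∀ m ∈ J, ∀ k ∈ J, m ≤ k →
    (∀ x ∈ LinearMap.ker (P m : Euc n →ₗ[ℝ] Euc n), Ψ m k (Phi A k m x) = x) ∧
    (∀ x ∈ LinearMap.ker (P k : Euc n →ₗ[ℝ] Euc n), Ψ m k x ∈ LinearMap.ker (P m : Euc n →ₗ[ℝ] Euc n) ∧ Phi A k m (Ψ m k x) = x) ∧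
    ‖Ψ m k ∘L (1 - P k)‖ ≤ K * Real.exp (-α * ((k : ℝ) - (m : ℝ)))

open Set

local notation "𝒩" f:max => LinearMap.ker (ContinuousLinearMap.toLinearMap f)
local notation "ℛ" f:max => LinearMap.range (ContinuousLinearMap.toLinearMap f)

section LinearAlgebra

variable {R E : Type*} [Ring R] [AddCommGroup E] [Module R E]

def LinearEquiv.ofBijOn {F : Type*} [AddCommGroup F] [Module R F] (f : E →ₗ[R] F)
    {p : Submodule R E} {q : Submodule R F} (hf : BijOn f p q) : p ≃ₗ[R] q :=
  .ofBijective (f.restrict hf.mapsTo) hf.bijective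

theorem isCompl_comap_map_of_injOn {f g : E →ₗ[R] E} {N W : Submodule R E}
    (hW : IsCompl W (N.map (g ∘ₗ f))) (hinj : InjOn (g ∘ₗ f) N) :
    IsCompl (W.comap g) (N.map f) := by
  constructor
  · rw [Submodule.disjoint_def]
    rintro _ hW' ⟨u, hu, rfl⟩
    have h0 : (g ∘ₗ f) u = 0 :=
      Submodule.disjoint_def.1 hW.disjoint _ hW' (Submodule.mem_map_of_mem hu)
    rw [hinj hu (zero_mem N) (h0.trans (map_zero _).symm), map_zero]
  · rw [codisjoint_iff, eq_top_iff]
    intro x _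
    obtain ⟨w, hw, _, ⟨u, hu, rfl⟩, hx⟩ :=
      Submodule.mem_sup.1 (hW.sup_eq_top ▸ Submodule.mem_top : g x ∈ W ⊔ N.map (g ∘ₗ f))
    refine Submodule.mem_sup.2 ⟨x - f u, ?_, f u, Submodule.mem_map_of_mem hu, sub_add_cancel _ _⟩
    simpa [← hx] using hw

end LinearAlgebra

section Projections

variable {E : Type*} [NormedAddCommGroup E] [NormedSpace ℝ E]

theorem isCompl_range_ker {p : E →L[ℝ] E} (hp : p ∘L p = p) : IsCompl (ℛ p) (𝒩 p) :=
  LinearMap.IsIdempotentElem.isCompl (congrArg ContinuousLinearMap.toLinearMap hp)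

theorem apply_apply_of_comp_self {p : E →L[ℝ] E} (hp : p ∘L p = p) (x : E) : p (p x) = p x :=
  congrArg (· x) hp

theorem sub_apply_mem_ker {p : E →L[ℝ] E} (hp : p ∘L p = p) (x : E) : x - p x ∈ 𝒩 p := by
  simp [apply_apply_of_comp_self hp]

theorem comp_eq_comp_of_mapsTo {f p q : E →L[ℝ] E} (hp : p ∘L p = p) (hq : q ∘L q = q)
    (hR : MapsTo f (ℛ p) (ℛ q)) (hN : MapsTo f (𝒩 p) (𝒩 q)) : f ∘L p = q ∘L f := by
  ext x
  obtain ⟨y, hy⟩ : f (p x) ∈ ℛ q := hR ⟨x, rfl⟩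
  have hR' : q (f (p x)) = f (p x) := by
    rw [← hy]; exact apply_apply_of_comp_self hq y
  have hN' : q (f (x - p x)) = 0 := hN (sub_apply_mem_ker hp x)
  calc f (p x) = q (f (p x)) + q (f (x - p x)) := by rw [hR', hN', add_zero]
    _ = q (f x) := by rw [← map_add, ← map_add, add_sub_cancel]

theorem mapsTo_range_of_comp_eq_comp {f p q : E →L[ℝ] E} (hf : f ∘L p = q ∘L f) :
    MapsTo f (ℛ p) (ℛ q) := by
  rintro _ ⟨x, rfl⟩
  exact ⟨f x, (congrArg (· x) hf).symm⟩

theorem ker_le_range_of_comp_eq_comp {f p q : E →L[ℝ] E} (hp : p ∘L p = p)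
    (hf : f ∘L p = q ∘L f) (hinj : InjOn f (𝒩 p)) : 𝒩 f ≤ ℛ p := by
  intro x hx
  have hfx : f x = 0 := hx
  have hfpx : f (p x) = 0 := by rw [← ContinuousLinearMap.comp_apply, hf]; simp [hfx]
  have hx' : x - p x = 0 := hinj (sub_apply_mem_ker hp x) (zero_mem _) (by simp [hfx, hfpx])
  exact ⟨x, (sub_eq_zero.1 hx').symm⟩

theorem finrank_range_eq_of_bijOn_ker [FiniteDimensional ℝ E] {f p q : E →L[ℝ] E}
    (hf : BijOn f (𝒩 p) (𝒩 q)) : Module.finrank ℝ (ℛ p) = Module.finrank ℝ (ℛ q) := by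
  have hker := (LinearEquiv.ofBijOn f.toLinearMap hf).finrank_eq
  have hp := LinearMap.finrank_range_add_finrank_ker p.toLinearMap
  have hq := LinearMap.finrank_range_add_finrank_ker q.toLinearMap
  omega

theorem disjoint_map_range_map_ker {f p : E →L[ℝ] E} (hp : p ∘L p = p) (hf : 𝒩 f ≤ ℛ p) :
    Disjoint ((ℛ p).map f.toLinearMap) ((𝒩 p).map f.toLinearMap) := by
  rw [Submodule.disjoint_def]
  rintro _ ⟨a, ha, rfl⟩ ⟨b, hb, hab⟩
  have hab' : a - b ∈ 𝒩 f := by rw [LinearMap.mem_ker, map_sub, ← hab, sub_self]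
  have hb' : b ∈ ℛ p := by simpa using (ℛ p).sub_mem ha (hf hab')
  rw [← hab, Submodule.disjoint_def.1 (isCompl_range_ker hp).disjoint b hb' hb, map_zero]

theorem range_eq_comap_of_isCompl {p : E →L[ℝ] E} {g : E →ₗ[ℝ] E} {W : Submodule ℝ E}
    (hp : p ∘L p = p) (hW : (ℛ p).map g ≤ W) (hcompl : IsCompl (W.comap g) (𝒩 p)) :
    ℛ p = W.comap g :=
  eq_of_le_of_inf_le_of_sup_le (Submodule.map_le_iff_le_comap.1 hW)
    (by rw [hcompl.inf_eq_bot]; exact bot_le)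
    (by rw [(isCompl_range_ker hp).sup_eq_top]; exact le_top)

theorem exists_projections_extending [FiniteDimensional ℝ E] {P : ℤ → (E →L[ℝ] E)}
    {R U : ℤ → Submodule ℝ E} {m l : ℤ} (hP : P m ∘L P m = P m) (hRm : R m = ℛ (P m))
    (hUm : U m = 𝒩 (P m)) (hRU : ∀ k, m ≤ k → k ≤ l → IsCompl (R k) (U k)) :
    ∃ Q : ℤ → (E →L[ℝ] E), (∀ k ≤ m, Q k = P k) ∧
      ∀ k, m ≤ k → k ≤ l → Q k ∘L Q k = Q k ∧ ℛ (Q k) = R k ∧ 𝒩 (Q k) = U k := by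
  classical
  refine ⟨fun k => if h : m < k ∧ k ≤ l then
      ((R k).projection (U k) (hRU k h.1.le h.2)).toContinuousLinearMap else P k,
    fun k hk => dif_neg (by omega), fun k hmk hk => ?_⟩
  rcases hmk.lt_or_eq with hmk | rfl
  · simp only [dif_pos (And.intro hmk hk)]
    refine ⟨ContinuousLinearMap.ext fun x => ?_, by simp, by simp⟩
    simp only [ContinuousLinearMap.comp_apply, LinearMap.coe_toContinuousLinearMap']
    rw [Submodule.projection_eq_self_iff]
    exact Submodule.projection_apply_mem _ x
  · simp only [lt_irrefl, false_and, dite_false]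
    exact ⟨hP, hRm.symm, hUm.symm⟩

/-- `T` inverts `f : N(p) → N(q)` and vanishes on `R(q)`. -/
def IsKerInverse (f p q T : E →L[ℝ] E) : Prop :=
  ∀ x, T x ∈ 𝒩 p ∧ f (T x) = x - q x

namespace IsKerInverse

variable {f p q T T' : E →L[ℝ] E}

theorem exists_of_bijOn [FiniteDimensional ℝ E] (hq : q ∘L q = q) (hf : BijOn f (𝒩 p) (𝒩 q)) :
    ∃ T, IsKerInverse f p q T := by
  let e := LinearEquiv.ofBijOn f.toLinearMap hf
  let π : E →ₗ[ℝ] 𝒩 q := (1 - q : E →L[ℝ] E).toLinearMap.codRestrict (𝒩 q) fun x => by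
    simpa using sub_apply_mem_ker hq x
  refine ⟨((𝒩 p).subtype ∘ₗ e.symm.toLinearMap ∘ₗ π).toContinuousLinearMap,
    fun x => ⟨(e.symm (π x)).2, ?_⟩⟩
  exact congrArg Subtype.val (e.apply_symm_apply (π x))

theorem eq (hT : IsKerInverse f p q T) (hT' : IsKerInverse f p q T') (hf : InjOn f (𝒩 p)) :
    T = T' := by
  ext x
  exact hf (hT x).1 (hT' x).1 ((hT x).2.trans (hT' x).2.symm)

theorem apply_apply (hT : IsKerInverse f p q T) (hf : BijOn f (𝒩 p) (𝒩 q)) {x : E}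
    (hx : x ∈ 𝒩 p) : T (f x) = x := by
  have hfx : q (f x) = 0 := hf.mapsTo hx
  refine hf.injOn (hT _).1 hx ?_
  rw [(hT _).2, hfx, sub_zero]

theorem comp_one_sub (hT : IsKerInverse f p q T) (hq : q ∘L q = q) (hf : InjOn f (𝒩 p)) :
    T ∘L (1 - q) = T := by
  refine eq (fun x => ⟨(hT _).1, ?_⟩) hT hf
  simp [(hT _).2, apply_apply_of_comp_self hq]

theorem of_inverseOn {Ψ : E →L[ℝ] E} (hq : q ∘L q = q)
    (hΨ : ∀ x ∈ 𝒩 q, Ψ x ∈ 𝒩 p ∧ f (Ψ x) = x) : IsKerInverse f p q (Ψ ∘L (1 - q)) := by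
  intro x
  simpa using hΨ _ (sub_apply_mem_ker hq x)

theorem inverseOn (hT : IsKerInverse f p q T) {x : E} (hx : x ∈ 𝒩 q) :
    T x ∈ 𝒩 p ∧ f (T x) = x := by
  have hqx : q x = 0 := hx
  rw [(hT x).2, hqx, sub_zero]
  exact ⟨(hT x).1, rfl⟩

theorem comp {g r S : E →L[ℝ] E} (hT : IsKerInverse f p q T) (hS : IsKerInverse g q r S) :
    IsKerInverse (g ∘L f) p r (T ∘L S) := by
  intro x
  refine ⟨(hT _).1, ?_⟩
  have hSx : q (S x) = 0 := (hS x).1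
  simp [(hT _).2, hSx, (hS x).2]

end IsKerInverse

end Projections

section Transition

variable {n : ℕ} (A : ℤ → (Euc n →L[ℝ] Euc n))

-- In `Phi` the coercion `List ℕ → List ℤ` elaborates to a monadic bind.
theorem Phi_eq (k m : ℤ) :
    Phi A k m = ((List.range (k - m).toNat).map fun i : ℕ => A (m + i)).reverse.prod := by
  simp only [Phi, List.pure_def, List.bind_eq_flatMap, ← List.map_eq_flatMap, List.map_map]
  rfl

theorem Phi_self (k : ℤ) : Phi A k k = 1 := by
  simp [Phi_eq]

theorem Phi_succ {k m : ℤ} (h : m ≤ k) : Phi A (k + 1) m = A k ∘L Phi A k m := by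
  have hlen : (k + 1 - m).toNat = (k - m).toNat + 1 := by omega
  have hlast : m + ((k - m).toNat : ℤ) = k := by omega
  simp only [Phi_eq, hlen, List.range_succ, List.map_append, List.reverse_append, List.map_cons,
    List.map_nil, List.reverse_cons, List.reverse_nil, List.nil_append, List.prod_append,
    List.prod_cons, List.prod_nil, mul_one, hlast]
  rfl

theorem Phi_succ_self (k : ℤ) : Phi A (k + 1) k = A k := by
  rw [Phi_succ A le_rfl, Phi_self]
  rfl

theorem Phi_comp {j l k : ℤ} (hjl : j ≤ l) (hlk : l ≤ k) :
    Phi A k j = Phi A k l ∘L Phi A l j := by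
  induction k, hlk using Int.leInduction with
  | base => rw [Phi_self]; rfl
  | succ k hlk ih => rw [Phi_succ A (hjl.trans hlk), Phi_succ A hlk, ih]; rfl

theorem Phi_comp_apply {j l k : ℤ} (hjl : j ≤ l) (hlk : l ≤ k) (x : Euc n) :
    Phi A k j x = Phi A k l (Phi A l j x) := by
  rw [Phi_comp A hjl hlk]; rfl

variable {A}

theorem mapsTo_Phi {S : ℤ → Set (Euc n)} {j k : ℤ}
    (hA : ∀ i, j ≤ i → i < k → MapsTo (A i) (S i) (S (i + 1))) (hjk : j ≤ k) :
    MapsTo (Phi A k j) (S j) (S k) := by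
  induction k, hjk using Int.leInduction with
  | base => rw [Phi_self]; exact mapsTo_id _
  | succ k hjk ih =>
    rw [Phi_succ A hjk]
    exact (hA k hjk (by omega)).comp (ih fun i hi hik => hA i hi (by omega))

theorem bijOn_Phi {S : ℤ → Set (Euc n)} {j k : ℤ}
    (hA : ∀ i, j ≤ i → i < k → BijOn (A i) (S i) (S (i + 1))) (hjk : j ≤ k) :
    BijOn (Phi A k j) (S j) (S k) := by
  induction k, hjk using Int.leInduction with
  | base => rw [Phi_self]; exact bijOn_id _
  | succ k hjk ih =>
    rw [Phi_succ A hjk]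
    exact (hA k hjk (by omega)).comp (ih fun i hi hik => hA i hi (by omega))

end Transition

section Construction

variable {n : ℕ} {A P : ℤ → (Euc n →L[ℝ] Euc n)} {m : ℤ}

theorem mapsTo_comap_Phi (W : Submodule ℝ (Euc n)) {k : ℤ} (hk : k + 1 ≤ 0) :
    MapsTo (A k) (W.comap (Phi A 0 k).toLinearMap) (W.comap (Phi A 0 (k + 1)).toLinearMap) := by
  intro x hx
  have h : Phi A 0 k x = Phi A 0 (k + 1) (A k x) := by
    rw [Phi_comp_apply A (by omega : k ≤ k + 1) hk, Phi_succ_self]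
  simpa [h] using hx

theorem bijOn_map_Phi {N : Submodule ℝ (Euc n)} (hN : InjOn (Phi A 0 m) N) {k : ℤ} (hmk : m ≤ k)
    (hk : k + 1 ≤ 0) :
    BijOn (A k) (N.map (Phi A k m).toLinearMap) (N.map (Phi A (k + 1) m).toLinearMap) := by
  have hΦ : ⇑(Phi A 0 m) = Phi A 0 (k + 1) ∘ (A k ∘ Phi A k m) := by
    rw [Phi_comp A (by omega : m ≤ k + 1) hk, Phi_succ A hmk]; rfl
  have hinj : InjOn (A k ∘ Phi A k m) N := (hΦ ▸ hN).of_comp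
  simp only [Submodule.map_coe, ContinuousLinearMap.coe_coe, Phi_succ A hmk,
    ContinuousLinearMap.coe_comp, image_comp]
  exact hinj.image_of_comp.bijOn_image

theorem exists_invariant_complements (hm : m ≤ 0) (hP : P m ∘L P m = P m)
    (H1 : InjOn (Phi A 0 m) (𝒩 (P m))) (H2 : 𝒩 (Phi A 0 m) ≤ ℛ (P m)) :
    ∃ R U : ℤ → Submodule ℝ (Euc n), R m = ℛ (P m) ∧ U m = 𝒩 (P m) ∧
      (∀ k, m ≤ k → k ≤ 0 → IsCompl (R k) (U k)) ∧
      ∀ k, m ≤ k → k + 1 ≤ 0 → MapsTo (A k) (R k) (R (k + 1)) ∧ BijOn (A k) (U k) (U (k + 1)) := by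
  obtain ⟨W, hPW, hW⟩ := (disjoint_map_range_map_ker hP H2).exists_isCompl
  have hcompl (k : ℤ) (hmk : m ≤ k) (hk : k ≤ 0) :
      IsCompl (W.comap (Phi A 0 k).toLinearMap) ((𝒩 (P m)).map (Phi A k m).toLinearMap) := by
    rw [Phi_comp A hmk hk] at hW H1
    exact isCompl_comap_map_of_injOn hW H1
  have hUm : (𝒩 (P m)).map (Phi A m m).toLinearMap = 𝒩 (P m) := by
    rw [Phi_self]; exact Submodule.map_id _
  refine ⟨fun k => W.comap (Phi A 0 k).toLinearMap, fun k => (𝒩 (P m)).map (Phi A k m).toLinearMap,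
    (range_eq_comap_of_isCompl hP hPW (hUm ▸ hcompl m le_rfl hm)).symm, hUm, hcompl,
    fun k hmk hk => ⟨mapsTo_comap_Phi W hk, bijOn_map_Phi H1 hmk hk⟩⟩

end Construction

section ExpBound

open Real

theorem exists_bound_on_finite {ι : Type*} {s : Set ι} (hs : s.Finite) (g : ι → ℝ) :
    ∃ C, 0 ≤ C ∧ ∀ x ∈ s, g x ≤ C := by
  obtain ⟨C, hC⟩ := (hs.image g).bddAbove
  exact ⟨max C 0, le_max_right _ _,
    fun x hx => (hC (mem_image_of_mem g hx)).trans (le_max_left _ _)⟩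

theorem exists_exp_bound_of_split {g : ℤ → ℤ → ℝ} {c : ℤ → ℝ} {K α : ℝ} {m : ℤ}
    (hK : 0 ≤ K) (hα : 0 ≤ α) (hm : m ≤ 0)
    (hle : ∀ j k, j ≤ k → k ≤ m → g j k ≤ K * exp (-α * (k - j)))
    (hsplit : ∀ j k, j ≤ m → m < k → k ≤ 0 → g j k ≤ c k * g j m) (hc : ∀ k, 0 ≤ c k) :
    ∃ C, ∀ j k, j ≤ k → k ≤ 0 → g j k ≤ C * exp (-α * (k - j)) := by
  obtain ⟨C₁, hC₁, hc_le⟩ := exists_bound_on_finite (finite_Icc m 0) c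
  obtain ⟨C₂, hC₂, hg_le⟩ :=
    exists_bound_on_finite ((finite_Icc m 0).prod (finite_Icc m 0)) fun p => g p.1 p.2
  -- time spans inside `[m, 0]` are at most `-m`: the weight costs at most a factor `exp (-α * m)`
  have hE : 1 ≤ exp (-α * m) := one_le_exp (by nlinarith [(Int.cast_nonpos.2 hm : (m : ℝ) ≤ 0)])
  refine ⟨(K + C₁ * K + C₂) * exp (-α * m), fun j k hjk hk => ?_⟩
  have hkR : (k : ℝ) ≤ 0 := by exact_mod_cast hk
  rcases le_or_gt k m with hkm | hmk
  · calc g j k ≤ K * exp (-α * (k - j)) := hle j k hjk hkm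
      _ ≤ (K + C₁ * K + C₂) * exp (-α * m) * exp (-α * (k - j)) := by
        gcongr
        nlinarith [mul_nonneg hC₁ hK]
  rcases le_or_gt j m with hjm | hmj
  · have hexp : exp (-α * (m - j)) ≤ exp (-α * m) * exp (-α * (k - j)) := by
      rw [← exp_add]; gcongr; nlinarith
    calc g j k ≤ c k * g j m := hsplit j k hjm hmk hk
      _ ≤ c k * (K * exp (-α * (m - j))) := mul_le_mul_of_nonneg_left (hle j m hjm le_rfl) (hc k)
      _ ≤ C₁ * (K * exp (-α * (m - j))) := by gcongr; exact hc_le k ⟨hmk.le, hk⟩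
      _ ≤ C₁ * K * (exp (-α * m) * exp (-α * (k - j))) := by rw [mul_assoc]; gcongr
      _ ≤ (K + C₁ * K + C₂) * exp (-α * m) * exp (-α * (k - j)) := by
        rw [mul_assoc _ (exp _)]; gcongr; linarith
  · have hexp : 1 ≤ exp (-α * m) * exp (-α * (k - j)) := by
      rw [← exp_add]
      have : ((k - j : ℤ) : ℝ) ≤ -m := by exact_mod_cast (by omega : k - j ≤ -m)
      push_cast at this
      exact one_le_exp (by nlinarith)
    calc g j k ≤ C₂ := hg_le (j, k) ⟨⟨hmj.le, hjk.trans hk⟩, ⟨hmj.le.trans hjk, hk⟩⟩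
      _ ≤ C₂ * (exp (-α * m) * exp (-α * (k - j))) := le_mul_of_one_le_right hC₂ hexp
      _ ≤ (K + C₁ * K + C₂) * exp (-α * m) * exp (-α * (k - j)) := by
        rw [mul_assoc _ (exp _)]; gcongr; nlinarith [mul_nonneg hC₁ hK]

end ExpBound

namespace ExpDichotomyOn

open Real

variable {n : ℕ} {A P Q : ℤ → (Euc n →L[ℝ] Euc n)} {K α : ℝ} {m : ℤ}

theorem step_of_lt (hED : ExpDichotomyOn A {k | k ≤ m} P K α) (hQP : ∀ k ≤ m, Q k = P k)
    {k : ℤ} (hk : k < m) :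
    MapsTo (A k) (ℛ (Q k)) (ℛ (Q (k + 1))) ∧ BijOn (A k) (𝒩 (Q k)) (𝒩 (Q (k + 1))) := by
  rw [hQP k hk.le, hQP (k + 1) hk]
  have hinv := hED.invariance k hk.le (k + 1) hk (by omega)
  rw [Phi_succ_self] at hinv
  exact ⟨mapsTo_range_of_comp_eq_comp hinv, hED.bijOn k hk.le hk⟩

theorem exists_forward_bound (hED : ExpDichotomyOn A {k | k ≤ m} P K α) (hm : m ≤ 0)
    (hQP : ∀ k ≤ m, Q k = P k) :
    ∃ C, ∀ j k, j ≤ k → k ≤ 0 → ‖Phi A k j ∘L Q j‖ ≤ C * exp (-α * (k - j)) := by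
  refine exists_exp_bound_of_split (c := fun k => ‖Phi A k m‖) (le_trans zero_le_one hED.one_le_K)
    hED.alpha_pos.le hm (fun j k hjk hkm => ?_) (fun j k hjm hmk _ => ?_) fun _ => norm_nonneg _
  · rw [hQP j (hjk.trans hkm)]
    exact hED.forward j (hjk.trans hkm) k hkm hjk
  · rw [Phi_comp A hjm hmk.le, ContinuousLinearMap.comp_assoc]
    exact ContinuousLinearMap.opNorm_comp_le _ _

theorem exists_backward_bound (hED : ExpDichotomyOn A {k | k ≤ m} P K α) (hm : m ≤ 0)
    (hQP : ∀ k ≤ m, Q k = P k) {T : ℤ → ℤ → (Euc n →L[ℝ] Euc n)}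
    (hT : ∀ j k, j ≤ k → k ≤ 0 → IsKerInverse (Phi A k j) (Q j) (Q k) (T j k))
    (hinj : ∀ j k, j ≤ k → k ≤ 0 → InjOn (Phi A k j) (𝒩 (Q j))) :
    ∃ C, ∀ j k, j ≤ k → k ≤ 0 → ‖T j k‖ ≤ C * exp (-α * (k - j)) := by
  obtain ⟨Ψ, hΨ⟩ := hED.backward
  refine exists_exp_bound_of_split (c := fun k => ‖T m k‖) (le_trans zero_le_one hED.one_le_K)
    hED.alpha_pos.le hm (fun j k hjk hkm => ?_) (fun j k hjm hmk hk => ?_) fun _ => norm_nonneg _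
  · have hj : j ≤ m := hjk.trans hkm
    have hΨT : Ψ j k ∘L (1 - Q k) = T j k := by
      refine IsKerInverse.eq ?_ (hT j k hjk (hkm.trans hm)) (hinj j k hjk (hkm.trans hm))
      rw [hQP j hj, hQP k hkm]
      exact .of_inverseOn (hED.proj k hkm) (hΨ j hj k hkm hjk).2.1
    rw [← hΨT, hQP k hkm]
    exact (hΨ j hj k hkm hjk).2.2
  · have hcomp : T j m ∘L T m k = T j k := by
      refine IsKerInverse.eq ?_ (hT j k (hjm.trans hmk.le) hk) (hinj j k (hjm.trans hmk.le) hk)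
      rw [Phi_comp A hjm hmk.le]
      exact (hT j m hjm hm).comp (hT m k hmk.le hk)
    rw [← hcomp, mul_comm]
    exact ContinuousLinearMap.opNorm_comp_le _ _

theorem extend (hED : ExpDichotomyOn A {k | k ≤ m} P K α) (hm : m ≤ 0)
    (hQP : ∀ k ≤ m, Q k = P k) (hproj : ∀ k ≤ 0, Q k ∘L Q k = Q k)
    (hrange : ∀ k, k + 1 ≤ 0 → MapsTo (A k) (ℛ (Q k)) (ℛ (Q (k + 1))))
    (hker : ∀ k, k + 1 ≤ 0 → BijOn (A k) (𝒩 (Q k)) (𝒩 (Q (k + 1)))) :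
    ∃ K', ExpDichotomyOn A {k | k ≤ 0} Q K' α := by
  have hbij (j k : ℤ) (hjk : j ≤ k) (hk : k ≤ 0) : BijOn (Phi A k j) (𝒩 (Q j)) (𝒩 (Q k)) :=
    bijOn_Phi (fun i _ hik => hker i (by omega)) hjk
  have hT (j k : ℤ) : ∃ T, j ≤ k → k ≤ 0 → IsKerInverse (Phi A k j) (Q j) (Q k) T := by
    by_cases h : j ≤ k ∧ k ≤ 0
    · obtain ⟨T, hT⟩ := IsKerInverse.exists_of_bijOn (hproj k h.2) (hbij j k h.1 h.2)
      exact ⟨T, fun _ _ => hT⟩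
    · exact ⟨0, fun hjk hk => (h ⟨hjk, hk⟩).elim⟩
  choose T hT using hT
  obtain ⟨C₁, hC₁⟩ := hED.exists_forward_bound hm hQP
  obtain ⟨C₂, hC₂⟩ := hED.exists_backward_bound hm hQP hT fun j k hjk hk => (hbij j k hjk hk).injOn
  set K' := max 1 (max C₁ C₂)
  have hK' {C : ℝ} (hC : C ≤ K') {j k : ℤ} :
      C * Real.exp (-α * (k - j)) ≤ K' * Real.exp (-α * (k - j)) := by gcongr
  refine ⟨K',
    { one_le_K := le_max_left _ _
      alpha_pos := hED.alpha_pos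
      proj := hproj
      rank_const := fun k hk l hl => (finrank_range_eq_of_bijOn_ker (hbij k 0 hk le_rfl)).trans
        (finrank_range_eq_of_bijOn_ker (hbij l 0 hl le_rfl)).symm
      invariance := fun j hj k (hk : k ≤ 0) hjk =>
        comp_eq_comp_of_mapsTo (hproj j hj) (hproj k hk)
          (mapsTo_Phi (fun i _ hik => hrange i (by omega)) hjk) (hbij j k hjk hk).mapsTo
      forward := fun j _ k hk hjk =>
        (hC₁ j k hjk hk).trans (hK' ((le_max_left _ _).trans (le_max_right _ _)))
      bijOn := fun k _ hk => hker k hk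
      backward := ⟨T, fun j _ k hk hjk =>
        ⟨fun _ hx => (hT j k hjk hk).apply_apply (hbij j k hjk hk) hx,
          fun _ hx => (hT j k hjk hk).inverseOn hx, ?_⟩⟩ }⟩
  rw [(hT j k hjk hk).comp_one_sub (hproj k hk) (hbij j k hjk hk).injOn]
  exact (hC₂ j k hjk hk).trans (hK' ((le_max_right _ _).trans (le_max_right _ _)))

theorem injOn_Phi_ker_and_ker_Phi_le (hQ : ExpDichotomyOn A {k | k ≤ 0} Q K α) (hm : m ≤ 0) :
    InjOn (Phi A 0 m) (𝒩 (Q m)) ∧ 𝒩 (Phi A 0 m) ≤ ℛ (Q m) := by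
  have hinj : InjOn (Phi A 0 m) (𝒩 (Q m)) := (bijOn_Phi (fun i _ hi =>
    hQ.bijOn i (show i ≤ 0 by omega) (show i + 1 ≤ 0 by omega)) hm).injOn
  exact ⟨hinj, ker_le_range_of_comp_eq_comp (hQ.proj m hm)
    (hQ.invariance m hm 0 (le_refl (0 : ℤ)) hm) hinj⟩

theorem exists_extension (hED : ExpDichotomyOn A {k | k ≤ m} P K α) (hm : m ≤ 0)
    (H1 : InjOn (Phi A 0 m) (𝒩 (P m))) (H2 : 𝒩 (Phi A 0 m) ≤ ℛ (P m)) :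
    ∃ (Q : ℤ → (Euc n →L[ℝ] Euc n)) (K' : ℝ),
      ExpDichotomyOn A {k | k ≤ 0} Q K' α ∧ ∀ k ≤ m, Q k = P k := by
  have hPm := hED.proj m (le_refl m)
  obtain ⟨R, U, hRm, hUm, hRU, hRU_step⟩ := exists_invariant_complements hm hPm H1 H2
  obtain ⟨Q, hQP, hQ⟩ := exists_projections_extending hPm hRm hUm hRU
  have hproj (k : ℤ) (hk : k ≤ 0) : Q k ∘L Q k = Q k := by
    rcases le_or_gt k m with hkm | hmk
    · rw [hQP k hkm]; exact hED.proj k hkm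
    · exact (hQ k hmk.le hk).1
  have hstep (k : ℤ) (hk : k + 1 ≤ 0) :
      MapsTo (A k) (ℛ (Q k)) (ℛ (Q (k + 1))) ∧ BijOn (A k) (𝒩 (Q k)) (𝒩 (Q (k + 1))) := by
    rcases lt_or_ge k m with hkm | hmk
    · exact hED.step_of_lt hQP hkm
    · obtain ⟨-, hR, hU⟩ := hQ k hmk (by omega)
      obtain ⟨-, hR', hU'⟩ := hQ (k + 1) (by omega) hk
      rw [hR, hU, hR', hU']
      exact hRU_step k hmk hk
  obtain ⟨K', hK'⟩ :=
    hED.extend hm hQP hproj (fun k hk => (hstep k hk).1) fun k hk => (hstep k hk).2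
  exact ⟨Q, K', hK', hQP⟩

end ExpDichotomyOn

theorem statement14_general {n : ℕ} (A P : ℤ → (Euc n →L[ℝ] Euc n)) (K α : ℝ)
    (m : ℤ) (hm : m < 0)
    (hED : ExpDichotomyOn A {k : ℤ | k ≤ m} P K α) :
    (∃ (Q : ℤ → (Euc n →L[ℝ] Euc n)) (K' α' : ℝ),
        ExpDichotomyOn A {k : ℤ | k ≤ 0} Q K' α' ∧ ∀ k : ℤ, k ≤ m → Q k = P k) ↔
    (Set.InjOn (Phi A 0 m) (LinearMap.ker (P m : Euc n →ₗ[ℝ] Euc n) : Set (Euc n)) ∧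
      LinearMap.ker (Phi A 0 m : Euc n →ₗ[ℝ] Euc n) ≤ LinearMap.range (P m : Euc n →ₗ[ℝ] Euc n)) := by
  constructor
  · rintro ⟨Q, K', α', hQ, hQP⟩
    rw [← hQP m le_rfl]
    exact hQ.injOn_Phi_ker_and_ker_Phi_le hm.le
  · rintro ⟨H1, H2⟩
    obtain ⟨Q, K', hQ, hQP⟩ := hED.exists_extension hm.le H1 H2
    exact ⟨Q, K', α, hQ, hQP⟩

/-- for `m < 0`, suppose the equation has an exponential dichotomy on
`(-∞, m]` with projection `P` of rank `r`. Then the equation has an exponential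
dichotomy on `(-∞, 0]` with a projection family `Q` satisfying `Q(k) = P(k)` for all
`k ≤ m` if and only if `Φ(0,m)` is one-to-one on `N(P(m))` and
`N(Φ(0,m)) ⊆ R(P(m))`. -/
theorem statement14 {n : ℕ} (A P : ℤ → (Euc n →L[ℝ] Euc n)) (K α : ℝ)
    (m : ℤ) (hm : m < 0) (r : ℕ)
    (hED : ExpDichotomyOn A {k : ℤ | k ≤ m} P K α)
    (hrank : Module.finrank ℝ (LinearMap.range (P m : Euc n →ₗ[ℝ] Euc n)) = r) :
    (∃ (Q : ℤ → (Euc n →L[ℝ] Euc n)) (K' α' : ℝ),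
        ExpDichotomyOn A {k : ℤ | k ≤ 0} Q K' α' ∧ ∀ k : ℤ, k ≤ m → Q k = P k) ↔
    (Set.InjOn (Phi A 0 m) (LinearMap.ker (P m : Euc n →ₗ[ℝ] Euc n) : Set (Euc n)) ∧
      LinearMap.ker (Phi A 0 m : Euc n →ₗ[ℝ] Euc n) ≤ LinearMap.range (P m : Euc n →ₗ[ℝ] Euc n)) :=
  statement14_general A P K α m hm hED
end
end

section
/- Let a be a fixed integer and let {μ_k}_{k=a}^{∞} be a bounded sequence of nonnegative real numbers for which there exist positive numbers D, α, δ such that for all k ≥ a: μ_k ≤ D e^{−α(k−a)} + δ · Σ_{m=a}^{k−1} e^{−α(k−m−1)} μ_m + δ · Σ_{m=k}^{∞} e^{−α(m+1−k)} μ_m (sums over empty ranges are 0). If σ = δ(1+e^{−α})(1−e^{−α})^{−1} < 1, then for all k ≥ a, μ_k ≤ [D / (1 − δe^{−α}/(1 − e^{−(α+β)}))] · e^{−β(k−a)}, where β = −log(cosh α − √(sinh² α − 2δ sinh α)). -/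
/-!
Write `y = e^{-α}` and `x = e^{-β}`. The geometric sequence `ν k = E x^{k-a}`, with `E` the
constant of the claim, satisfies the inequality with equality: its past and tail sums are
geometric series, and `x` is a root of the characteristic equation
`δ (1 - y²) = (x - y)(1 - x y)`, i.e. of `x² - 2x cosh α + 1 + 2δ sinh α = 0`.
The difference `w = μ - ν` is bounded above and satisfies the homogeneous inequality, whose
kernel has total mass at most `(1 + y)/(1 - y)`. So `sup w ≤ σ sup w` with `σ < 1`, and `w ≤ 0`.
-/

open Real Finset

theorem Finset.sum_Icc_sub_one_eq_sum_range {M : Type*} [AddCommMonoid M] (a k : ℤ) (f : ℤ → M) :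
    ∑ m ∈ Icc a (k - 1), f m = ∑ i ∈ range (k - a).toNat, f (k - 1 - i) := by
  refine sum_nbij' (fun m => (k - 1 - m).toNat) (fun i => k - 1 - i) ?_ ?_ ?_ ?_ ?_ <;>
    intro m hm <;> simp only [mem_Icc, mem_range] at hm ⊢ <;> try omega
  congr 1; omega

theorem Real.exp_neg_mul_natCast (α : ℝ) (n : ℕ) : exp (-α * n) = exp (-α) ^ n := by
  rw [mul_comm, exp_nat_mul]

section GronwallSums

variable (a : ℤ) (α : ℝ)

noncomputable def pastSum (w : ℤ → ℝ) (k : ℤ) : ℝ :=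
  ∑ m ∈ Icc a (k - 1), exp (-α * ((k : ℝ) - (m : ℝ) - 1)) * w m

noncomputable def tailSum (w : ℤ → ℝ) (k : ℤ) : ℝ :=
  ∑' j : ℕ, exp (-α * ((j : ℝ) + 1)) * w (k + j)

variable {a α}

theorem pastSum_eq_sum_range (w : ℤ → ℝ) (k : ℤ) :
    pastSum a α w k = ∑ i ∈ range (k - a).toNat, exp (-α) ^ i * w (k - 1 - i) := by
  rw [pastSum, sum_Icc_sub_one_eq_sum_range]
  refine sum_congr rfl fun i _ => ?_
  rw [← exp_neg_mul_natCast]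
  push_cast
  ring_nf

theorem exp_neg_mul_natCast_add_one (j : ℕ) :
    exp (-α * ((j : ℝ) + 1)) = exp (-α) ^ (j + 1) := by
  rw [← exp_neg_mul_natCast]; push_cast; rfl

theorem pastSum_sub (v w : ℤ → ℝ) (k : ℤ) :
    pastSum a α (v - w) k = pastSum a α v k - pastSum a α w k := by
  simp only [pastSum, Pi.sub_apply, mul_sub, sum_sub_distrib]

theorem tailSum_sub {v w : ℤ → ℝ} {k : ℤ}
    (hv : Summable fun j : ℕ => exp (-α * ((j : ℝ) + 1)) * v (k + j))
    (hw : Summable fun j : ℕ => exp (-α * ((j : ℝ) + 1)) * w (k + j)) :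
    tailSum α (v - w) k = tailSum α v k - tailSum α w k := by
  simp only [tailSum, Pi.sub_apply, mul_sub]
  exact hv.tsum_sub hw

theorem pastSum_le_of_le (hα : 0 < α) {w : ℤ → ℝ} {k : ℤ} {S : ℝ} (hS : 0 ≤ S)
    (hw : ∀ m, a ≤ m → w m ≤ S) : pastSum a α w k ≤ S / (1 - exp (-α)) := by
  have hy : exp (-α) < 1 := exp_lt_one_iff.mpr (neg_lt_zero.mpr hα)
  calc pastSum a α w k ≤ ∑ i ∈ range (k - a).toNat, exp (-α) ^ i * S := by
        rw [pastSum_eq_sum_range]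
        gcongr with i hi
        exact hw _ (by simp only [mem_range] at hi; omega)
    _ = S * ∑ i ∈ Ico 0 (k - a).toNat, exp (-α) ^ i := by rw [← sum_mul, range_eq_Ico, mul_comm]
    _ ≤ S * (exp (-α) ^ 0 / (1 - exp (-α))) := by
        gcongr; exact geom_sum_Ico_le_of_lt_one (exp_pos _).le hy
    _ = S / (1 - exp (-α)) := by ring

theorem tailSum_le_of_le (hα : 0 < α) {w : ℤ → ℝ} {k : ℤ} {S : ℝ}
    (hsum : Summable fun j : ℕ => exp (-α * ((j : ℝ) + 1)) * w (k + j))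
    (hw : ∀ j : ℕ, w (k + j) ≤ S) : tailSum α w k ≤ S * exp (-α) / (1 - exp (-α)) := by
  have hy : exp (-α) < 1 := exp_lt_one_iff.mpr (neg_lt_zero.mpr hα)
  have hgeom := summable_geometric_of_lt_one (exp_pos (-α)).le hy
  calc tailSum α w k ≤ ∑' j : ℕ, S * exp (-α) * exp (-α) ^ j := by
        refine hsum.tsum_le_tsum (fun j => ?_) (hgeom.mul_left _)
        rw [exp_neg_mul_natCast_add_one]
        calc exp (-α) ^ (j + 1) * w (k + j) ≤ exp (-α) ^ (j + 1) * S := by gcongr; exact hw j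
          _ = S * exp (-α) * exp (-α) ^ j := by ring
    _ = S * exp (-α) / (1 - exp (-α)) := by
        rw [tsum_mul_left, tsum_geometric_of_lt_one (exp_pos _).le hy, div_eq_mul_inv]

theorem le_zero_of_le_pastSum_add_tailSum (hα : 0 < α) {δ : ℝ} (hδ : 0 ≤ δ)
    (hσ : δ * (1 + exp (-α)) * (1 - exp (-α))⁻¹ < 1) {w : ℤ → ℝ}
    (hbdd : BddAbove (w '' Set.Ici a))
    (hsum : ∀ k, a ≤ k → Summable fun j : ℕ => exp (-α * ((j : ℝ) + 1)) * w (k + j))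
    (hw : ∀ k, a ≤ k → w k ≤ δ * pastSum a α w k + δ * tailSum α w k) {k : ℤ} (hk : a ≤ k) :
    w k ≤ 0 := by
  set S := sSup (w '' Set.Ici a)
  have hle : ∀ m, a ≤ m → w m ≤ S := fun m hm => le_csSup hbdd ⟨m, hm, rfl⟩
  refine (hle k hk).trans (not_lt.mp fun hS => ?_)
  have hy : exp (-α) < 1 := exp_lt_one_iff.mpr (neg_lt_zero.mpr hα)
  have hS_le : S ≤ δ * (1 + exp (-α)) * (1 - exp (-α))⁻¹ * S := by
    refine csSup_le ⟨w a, a, Set.self_mem_Ici, rfl⟩ ?_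
    rintro _ ⟨m, hm : a ≤ m, rfl⟩
    calc w m ≤ δ * pastSum a α w m + δ * tailSum α w m := hw m hm
      _ ≤ δ * (S / (1 - exp (-α))) + δ * (S * exp (-α) / (1 - exp (-α))) := by
          gcongr
          · exact pastSum_le_of_le hα hS.le hle
          · exact tailSum_le_of_le hα (hsum m hm) fun j => hle _ (by omega)
      _ = δ * (1 + exp (-α)) * (1 - exp (-α))⁻¹ * S := by ring
  nlinarith

end GronwallSums

theorem Real.exp_neg_mul_intCast_sub_eq_pow_toNat {a k : ℤ} (hk : a ≤ k) (β : ℝ) :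
    exp (-β * ((k : ℝ) - a)) = exp (-β) ^ (k - a).toNat := by
  rw [← exp_neg_mul_natCast]
  congr 2
  exact_mod_cast (Int.toNat_of_nonneg (sub_nonneg.mpr hk)).symm

section Geometric

variable {a : ℤ} {α : ℝ}

theorem pastSum_geometric {x : ℝ} (hx : x ≠ exp (-α)) (E : ℝ) (k : ℤ) :
    pastSum a α (fun m => E * x ^ (m - a).toNat) k
      = E * (x ^ (k - a).toNat - exp (-α) ^ (k - a).toNat) / (x - exp (-α)) := by
  rw [pastSum_eq_sum_range, eq_div_iff (sub_ne_zero.mpr hx), ← geom_sum₂_mul, geom_sum₂_comm,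
    sum_mul, sum_mul, mul_sum]
  refine sum_congr rfl fun i hi => ?_
  rw [show (k - 1 - i - a).toNat = (k - a).toNat - 1 - i by simp only [mem_range] at hi; omega]
  ring

theorem tailSum_geometric_term {x : ℝ} (E : ℝ) {k : ℤ} (hk : a ≤ k) (j : ℕ) :
    exp (-α * ((j : ℝ) + 1)) * (E * x ^ (k + j - a).toNat)
      = E * exp (-α) * x ^ (k - a).toNat * (x * exp (-α)) ^ j := by
  rw [exp_neg_mul_natCast_add_one, show (k + j - a).toNat = (k - a).toNat + j by omega]
  ring

theorem summable_tailSum_geometric {x : ℝ} (hx : 0 ≤ x) (hxy : x * exp (-α) < 1) (E : ℝ)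
    {k : ℤ} (hk : a ≤ k) :
    Summable fun j : ℕ => exp (-α * ((j : ℝ) + 1)) * (E * x ^ (k + j - a).toNat) := by
  simp only [tailSum_geometric_term E hk]
  exact (summable_geometric_of_lt_one (by positivity) hxy).mul_left _

theorem tailSum_geometric {x : ℝ} (hx : 0 ≤ x) (hxy : x * exp (-α) < 1) (E : ℝ)
    {k : ℤ} (hk : a ≤ k) :
    tailSum α (fun m => E * x ^ (m - a).toNat) k
      = E * exp (-α) * x ^ (k - a).toNat / (1 - x * exp (-α)) := by
  rw [tailSum]
  simp only [tailSum_geometric_term E hk]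
  rw [tsum_mul_left, tsum_geometric_of_lt_one (by positivity) hxy, div_eq_mul_inv]

theorem geometric_eq_pastSum_add_tailSum {x δ D E : ℝ} (hx : exp (-α) < x)
    (hxy : x * exp (-α) < 1)
    (hchar : δ * (1 - exp (-α) ^ 2) = (x - exp (-α)) * (1 - x * exp (-α)))
    (hE : δ * E = D * (x - exp (-α))) {k : ℤ} (hk : a ≤ k) :
    E * x ^ (k - a).toNat = D * exp (-α * ((k : ℝ) - a))
      + δ * pastSum a α (fun m => E * x ^ (m - a).toNat) k
      + δ * tailSum α (fun m => E * x ^ (m - a).toNat) k := by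
  have hx0 : 0 < x := (exp_pos _).trans hx
  rw [pastSum_geometric hx.ne' E, tailSum_geometric hx0.le hxy E hk,
    exp_neg_mul_intCast_sub_eq_pow_toNat hk]
  set X := x ^ (k - a).toNat
  have hxy' : x - exp (-α) ≠ 0 := sub_ne_zero.mpr hx.ne'
  have hpast : δ * (E * (X - exp (-α) ^ (k - a).toNat) / (x - exp (-α)))
      = D * (X - exp (-α) ^ (k - a).toNat) := by
    rw [mul_div_assoc', div_eq_iff hxy']
    linear_combination (X - exp (-α) ^ (k - a).toNat) * hE
  have htail : δ * (E * exp (-α) * X / (1 - x * exp (-α))) = (E - D) * X := by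
    rw [mul_div_assoc', div_eq_iff (sub_ne_zero.mpr hxy.ne')]
    refine mul_right_cancel₀ hxy' ?_
    linear_combination X * (E * hchar - (1 - x * exp (-α)) * hE)
  rw [hpast, htail]
  ring

end Geometric

/-- `e^{-β}`: the smaller root of `x² - 2x cosh α + 1 + 2δ sinh α = 0`. -/
noncomputable def gronwallRate (α δ : ℝ) : ℝ := cosh α - √(sinh α ^ 2 - 2 * δ * sinh α)

section GronwallRate

variable {α δ : ℝ}

theorem exp_neg_lt_gronwallRate (hα : 0 < α) (hδ : 0 < δ) : exp (-α) < gronwallRate α δ := by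
  have hs : 0 < sinh α := sinh_pos_iff.mpr hα
  have hsqrt : √(sinh α ^ 2 - 2 * δ * sinh α) < sinh α :=
    (sqrt_lt' hs).mpr (by nlinarith)
  rw [gronwallRate, ← cosh_sub_sinh]
  linarith

theorem gronwallRate_mul_exp_neg_lt_one (hα : 0 < α) : gronwallRate α δ * exp (-α) < 1 := by
  have hlt : gronwallRate α δ < exp α := by
    rw [gronwallRate, ← cosh_add_sinh]
    linarith [sinh_pos_iff.mpr hα, sqrt_nonneg (sinh α ^ 2 - 2 * δ * sinh α)]
  calc gronwallRate α δ * exp (-α) < exp α * exp (-α) := by gcongr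
    _ = 1 := by rw [← exp_add, add_neg_cancel, exp_zero]

theorem two_mul_le_sinh_of_lt_one (hα : 0 < α) (hσ : δ * (1 + exp (-α)) * (1 - exp (-α))⁻¹ < 1) :
    2 * δ ≤ sinh α := by
  have hy : 0 < exp (-α) := exp_pos _
  have hy1 : exp (-α) < 1 := exp_lt_one_iff.mpr (neg_lt_zero.mpr hα)
  have hδ : δ * (1 + exp (-α)) < 1 - exp (-α) := by
    rwa [← div_eq_mul_inv, div_lt_one (by linarith)] at hσ
  have hsinh : 2 * sinh α * exp (-α) = 1 - exp (-α) ^ 2 := by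
    rw [sinh_eq, exp_neg]; field_simp
  nlinarith [sq_nonneg (1 - exp (-α))]

theorem gronwallRate_char (hα : 0 < α) (hσ : δ * (1 + exp (-α)) * (1 - exp (-α))⁻¹ < 1) :
    δ * (1 - exp (-α) ^ 2)
      = (gronwallRate α δ - exp (-α)) * (1 - gronwallRate α δ * exp (-α)) := by
  have hdisc : 0 ≤ sinh α ^ 2 - 2 * δ * sinh α := by
    nlinarith [two_mul_le_sinh_of_lt_one hα hσ, sinh_pos_iff.mpr hα]
  rw [gronwallRate, ← cosh_sub_sinh]
  linear_combination (sinh α - √(sinh α ^ 2 - 2 * δ * sinh α) - δ) * cosh_sq_sub_sinh_sq α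
    + (cosh α - sinh α) * sq_sqrt hdisc

end GronwallRate

theorem le_geometric_of_le_pastSum_add_tailSum {a : ℤ} {α δ x D E : ℝ} (hα : 0 < α)
    (hδ : 0 ≤ δ) (hσ : δ * (1 + exp (-α)) * (1 - exp (-α))⁻¹ < 1)
    (hx : exp (-α) < x) (hxy : x * exp (-α) < 1)
    (hchar : δ * (1 - exp (-α) ^ 2) = (x - exp (-α)) * (1 - x * exp (-α)))
    (hE : δ * E = D * (x - exp (-α))) (hE0 : 0 ≤ E) {μ : ℤ → ℝ}
    (hbdd : ∃ C : ℝ, ∀ k : ℤ, a ≤ k → μ k ≤ C)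
    (hsum : ∀ k, a ≤ k → Summable fun j : ℕ => exp (-α * ((j : ℝ) + 1)) * μ (k + j))
    (hμ : ∀ k, a ≤ k →
      μ k ≤ D * exp (-α * ((k : ℝ) - a)) + δ * pastSum a α μ k + δ * tailSum α μ k)
    {k : ℤ} (hk : a ≤ k) :
    μ k ≤ E * x ^ (k - a).toNat := by
  set ν : ℤ → ℝ := fun m => E * x ^ (m - a).toNat
  have hx0 : 0 < x := (exp_pos _).trans hx
  have hν_sum : ∀ m, a ≤ m → Summable fun j : ℕ => exp (-α * ((j : ℝ) + 1)) * ν (m + j) :=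
    fun m hm => summable_tailSum_geometric hx0.le hxy E hm
  obtain ⟨C, hC⟩ := hbdd
  suffices (μ - ν) k ≤ 0 from sub_nonpos.mp this
  refine le_zero_of_le_pastSum_add_tailSum hα hδ hσ ⟨C, ?_⟩ (fun m hm => ?_) (fun m hm => ?_) hk
  · rintro _ ⟨m, hm : a ≤ m, rfl⟩
    have : 0 ≤ ν m := by positivity
    linarith [show (μ - ν) m = μ m - ν m from rfl, hC m hm]
  · simpa only [Pi.sub_apply, mul_sub] using (hsum m hm).sub (hν_sum m hm)
  · have hν : ν m = D * exp (-α * ((m : ℝ) - a)) + δ * pastSum a α ν m + δ * tailSum α ν m :=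
      geometric_eq_pastSum_add_tailSum hx hxy hchar hE hm
    rw [Pi.sub_apply, pastSum_sub, tailSum_sub (hsum m hm) (hν_sum m hm)]
    linarith [hμ m hm]

theorem statement15_general (a : ℤ) (μ : ℤ → ℝ) (D α δ : ℝ)
    (hD : 0 < D) (hα : 0 < α) (hδ : 0 < δ)
    (hbdd : ∃ C : ℝ, ∀ k : ℤ, a ≤ k → μ k ≤ C)
    (hsum : ∀ k : ℤ, a ≤ k →
      Summable fun j : ℕ => Real.exp (-α * ((j : ℝ) + 1)) * μ (k + j))
    (hineq : ∀ k : ℤ, a ≤ k →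
      μ k ≤ D * Real.exp (-α * ((k : ℝ) - (a : ℝ)))
        + δ * ∑ m ∈ Finset.Icc a (k - 1), Real.exp (-α * ((k : ℝ) - (m : ℝ) - 1)) * μ m
        + δ * ∑' j : ℕ, Real.exp (-α * ((j : ℝ) + 1)) * μ (k + j))
    (hσ : δ * (1 + Real.exp (-α)) * (1 - Real.exp (-α))⁻¹ < 1)
    (β : ℝ)
    (hβ : β = -Real.log (Real.cosh α - Real.sqrt (Real.sinh α ^ 2 - 2 * δ * Real.sinh α))) :
    ∀ k : ℤ, a ≤ k →
      μ k ≤ D / (1 - δ * Real.exp (-α) / (1 - Real.exp (-(α + β))))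
        * Real.exp (-β * ((k : ℝ) - (a : ℝ))) := by
  intro k hk
  have hx := exp_neg_lt_gronwallRate hα hδ
  have hxy := gronwallRate_mul_exp_neg_lt_one (δ := δ) hα
  have hchar := gronwallRate_char hα hσ
  set x := gronwallRate α δ
  have hβx : exp (-β) = x := by rw [hβ, neg_neg, ← gronwallRate, exp_log ((exp_pos _).trans hx)]
  have hαβ : exp (-(α + β)) = x * exp (-α) := by rw [neg_add, exp_add, hβx, mul_comm]
  have hconst : 1 - δ * exp (-α) / (1 - x * exp (-α)) = δ / (x - exp (-α)) := by
    have : 1 - exp (-α) * x ≠ 0 := by rw [mul_comm]; exact sub_ne_zero.mpr hxy.ne'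
    field_simp [sub_ne_zero.mpr hx.ne']
    linear_combination -hchar
  rw [hαβ, hconst, div_div_eq_mul_div, exp_neg_mul_intCast_sub_eq_pow_toNat hk, hβx]
  have hE0 : 0 ≤ D * (x - exp (-α)) / δ := div_nonneg (mul_nonneg hD.le (sub_pos.mpr hx).le) hδ.le
  exact le_geometric_of_le_pastSum_add_tailSum hα hδ.le hσ hx hxy hchar
    (mul_div_cancel₀ _ hδ.ne') hE0 hbdd hsum hineq hk

/-- discrete Gronwall-type lemma on `[a, ∞)` (Lemma 3 (i) of Zhou–Lu–Zhang).
The infinite tail `Σ_{m=k}^{∞} e^{-α(m+1-k)} μ_m` is written as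
`Σ'_{j : ℕ} e^{-α(j+1)} μ_{k+j}` via the substitution `m = k + j`. -/
theorem statement15 (a : ℤ) (μ : ℤ → ℝ) (D α δ : ℝ)
    (hD : 0 < D) (hα : 0 < α) (hδ : 0 < δ)
    (hnonneg : ∀ k : ℤ, a ≤ k → 0 ≤ μ k)
    (hbdd : ∃ C : ℝ, ∀ k : ℤ, a ≤ k → μ k ≤ C)
    (hsum : ∀ k : ℤ, a ≤ k →
      Summable fun j : ℕ => Real.exp (-α * ((j : ℝ) + 1)) * μ (k + j))
    (hineq : ∀ k : ℤ, a ≤ k →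
      μ k ≤ D * Real.exp (-α * ((k : ℝ) - (a : ℝ)))
        + δ * ∑ m ∈ Finset.Icc a (k - 1), Real.exp (-α * ((k : ℝ) - (m : ℝ) - 1)) * μ m
        + δ * ∑' j : ℕ, Real.exp (-α * ((j : ℝ) + 1)) * μ (k + j))
    (hσ : δ * (1 + Real.exp (-α)) * (1 - Real.exp (-α))⁻¹ < 1)
    (β : ℝ)
    (hβ : β = -Real.log (Real.cosh α - Real.sqrt (Real.sinh α ^ 2 - 2 * δ * Real.sinh α))) :
    ∀ k : ℤ, a ≤ k →
      μ k ≤ D / (1 - δ * Real.exp (-α) / (1 - Real.exp (-(α + β))))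
        * Real.exp (-β * ((k : ℝ) - (a : ℝ))) :=
  statement15_general a μ D α δ hD hα hδ hbdd hsum hineq hσ β hβ
end
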